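/- Fix $k \ge 1$ and $E > 0$. Among all assignments of nonnegative reals $b_{i,j}$ ($1 \le i \le k$, $1 \le j \le 2^{i-1}$) satisfying $\sum_{i=1}^{k}\sum_{j=1}^{2^{i-1}} b_{i,j} = E$, the quantity $M = \max_{1\le i \le k} \sum_{j=1}^{2^{i-1}} b_{i,j}^2$ satisfies $M \ge \left(\frac{(\sqrt 2 - 1)E}{\sqrt{2}^{\,k}-1}\right)^2$. -/
import Mathlib


open Finset Real

/-- The optimization at the heart of Theorem 2: for nonnegative `b_{i,j}` with total sum
`E`, the maximum over levels `i` of `∑_j b_{i,j}²` is at least `((√2-1)E/(√2^k-1))²`. -/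
theorem stmt_14 (k : ℕ) (hk : 1 ≤ k) (E : ℝ) (hE : 0 < E)
    (b : ℕ → ℕ → ℝ) (hb : ∀ i j, 0 ≤ b i j)
    (hsum : ∑ i ∈ Finset.Icc 1 k, ∑ j ∈ Finset.Icc 1 (2 ^ (i - 1)), b i j = E) :
    ((Real.sqrt 2 - 1) * E / (Real.sqrt 2 ^ k - 1)) ^ 2 ≤
      (Finset.Icc 1 k).sup' (Finset.nonempty_Icc.mpr hk)
        (fun i => ∑ j ∈ Finset.Icc 1 (2 ^ (i - 1)), (b i j) ^ 2) := by
  set M := (Finset.Icc 1 k).sup' (Finset.nonempty_Icc.mpr hk)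
        (fun i => ∑ j ∈ Finset.Icc 1 (2 ^ (i - 1)), (b i j) ^ 2) with hM
  have h1k : (1 : ℕ) ∈ Finset.Icc 1 k := by simp [hk]
  have hM0 : 0 ≤ M := by
    refine le_trans ?_ (Finset.le_sup' _ h1k)
    positivity
  have hs2 : (1:ℝ) < Real.sqrt 2 := by
    have : Real.sqrt 1 < Real.sqrt 2 := Real.sqrt_lt_sqrt (by norm_num) (by norm_num)
    simpa using this
  have hpow : (1:ℝ) < Real.sqrt 2 ^ k := one_lt_pow₀ hs2 (by omega)
  -- key pointwise bound
  have key : ∀ i ∈ Finset.Icc 1 k,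
      ∑ j ∈ Finset.Icc 1 (2 ^ (i - 1)), b i j ≤ Real.sqrt M * Real.sqrt 2 ^ (i - 1) := by
    intro i hi
    have hcs : (∑ j ∈ Finset.Icc 1 (2 ^ (i - 1)), b i j) ^ 2
        ≤ ((2:ℝ) ^ (i - 1)) * ∑ j ∈ Finset.Icc 1 (2 ^ (i - 1)), (b i j) ^ 2 := by
      have := sq_sum_le_card_mul_sum_sq (s := Finset.Icc 1 (2 ^ (i - 1))) (f := b i)
      simpa [Nat.card_Icc] using this
    have hle : (∑ j ∈ Finset.Icc 1 (2 ^ (i - 1)), b i j) ^ 2 ≤ ((2:ℝ) ^ (i - 1)) * M := by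
      have h2n : (0:ℝ) ≤ (2:ℝ) ^ (i - 1) := by positivity
      exact hcs.trans (mul_le_mul_of_nonneg_left (Finset.le_sup'
        (fun i => ∑ j ∈ Finset.Icc 1 (2 ^ (i - 1)), (b i j) ^ 2) hi) h2n)
    have hsn : 0 ≤ ∑ j ∈ Finset.Icc 1 (2 ^ (i - 1)), b i j := Finset.sum_nonneg fun j _ => hb i j
    have := Real.sqrt_le_sqrt hle
    have hsp : Real.sqrt ((2:ℝ) ^ (i-1)) = Real.sqrt 2 ^ (i-1) := by
      rw [show ((2:ℝ) ^ (i-1)) = (Real.sqrt 2 ^ (i-1))^2 by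
        rw [← pow_mul, mul_comm, pow_mul, Real.sq_sqrt (by norm_num)]]
      exact Real.sqrt_sq (by positivity)
    rw [Real.sqrt_sq hsn, Real.sqrt_mul (by positivity), hsp] at this
    calc _ ≤ _ := this
    _ = Real.sqrt M * Real.sqrt 2 ^ (i - 1) := by ring
  have hEle : E ≤ Real.sqrt M * ((Real.sqrt 2 ^ k - 1) / (Real.sqrt 2 - 1)) := by
    rw [← hsum]
    calc ∑ i ∈ Finset.Icc 1 k, ∑ j ∈ Finset.Icc 1 (2 ^ (i - 1)), b i j
        ≤ ∑ i ∈ Finset.Icc 1 k, Real.sqrt M * Real.sqrt 2 ^ (i - 1) :=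
          Finset.sum_le_sum key
      _ = Real.sqrt M * ∑ i ∈ Finset.Icc 1 k, Real.sqrt 2 ^ (i - 1) := by
          rw [Finset.mul_sum]
      _ = Real.sqrt M * ((Real.sqrt 2 ^ k - 1) / (Real.sqrt 2 - 1)) := by
          congr 1
          rw [show Finset.Icc 1 k = Finset.Ico 1 (k+1) by rfl, Finset.sum_Ico_eq_sum_range]
          simp only [Nat.add_sub_cancel, Nat.add_sub_cancel_left]
          exact geom_sum_eq (by linarith) k
  have hA : (Real.sqrt 2 - 1) * E / (Real.sqrt 2 ^ k - 1) ≤ Real.sqrt M := by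
    rw [div_le_iff₀ (by linarith)]
    have h21 : 0 < Real.sqrt 2 - 1 := by linarith
    rw [← mul_div_assoc, le_div_iff₀ h21] at hEle
    linarith
  have hA0 : 0 ≤ (Real.sqrt 2 - 1) * E / (Real.sqrt 2 ^ k - 1) := by
    apply div_nonneg <;> nlinarith
  calc ((Real.sqrt 2 - 1) * E / (Real.sqrt 2 ^ k - 1)) ^ 2
      ≤ Real.sqrt M ^ 2 := pow_le_pow_left₀ hA0 hA 2
    _ = M := Real.sq_sqrt hM0
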